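/- arXiv:1712.07533 — 2 statements merged into one kernel-verified Lean document; each statement's English description precedes it below -/
import Mathlib

section
/- If λ ≠ 0, then for every nonzero vector v ∈ ℂ^{l+1}, the limit lim_{n→∞} ‖Λ^n v‖^{1/n} exists and equals |λ|, where Λ is the Jordan block of eigenvalue λ and ‖·‖ is the sup norm on ℂ^{l+1}. -/
/-!
Write `Λ = λ + N` with `N` nilpotent (Cayley–Hamilton for the triangular matrix `Λ`). The
binomial expansion of `(λ + N)ⁿ` has boundedly many nonzero terms, so
`‖Λⁿ‖ ≤ C (n + 1)ᵐ |λ|ⁿ`. Likewise `Λ⁻¹ = λ⁻¹ + N'` with `N'` nilpotent, so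
`‖Λ⁻ⁿ‖ ≤ C' (n + 1)ᵐ' |λ|⁻ⁿ`. Hence `‖Λⁿ v‖` lies between `‖v‖ |λ|ⁿ / (C' (n + 1)ᵐ')` and
`C ‖v‖ (n + 1)ᵐ |λ|ⁿ`, and polynomial factors disappear under `n`-th roots.
-/

/-- The `(l+1)×(l+1)` lower-triangular Jordan block with `lam` on the diagonal
and `1` on the subdiagonal. -/
def jordanBlock (l : ℕ) (lam : ℂ) : Matrix (Fin (l + 1)) (Fin (l + 1)) ℂ :=
  fun i j => if (i : ℕ) = (j : ℕ) then lam else if (i : ℕ) = (j : ℕ) + 1 then 1 else 0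

open Finset Filter Topology Real

section TruncatedBinomial

variable {R : Type*}

theorem add_one_pow_eq_sum_range_of_pow_eq_zero [Semiring R] {M : R} {m : ℕ} (hM : M ^ m = 0)
    (n : ℕ) : (M + 1) ^ n = ∑ k ∈ range m, n.choose k • M ^ k := by
  have hvanish : ∀ k, (n < k ∨ m ≤ k) → n.choose k • M ^ k = 0 := by
    rintro k (hk | hk)
    · rw [Nat.choose_eq_zero_of_lt hk, zero_smul]
    · rw [← Nat.add_sub_of_le hk, pow_add, hM, zero_mul, smul_zero]
  have hextend : ∀ s, s ≤ n + 1 + m → (∀ k, s ≤ k → n < k ∨ m ≤ k) →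
      ∑ k ∈ range s, n.choose k • M ^ k = ∑ k ∈ range (n + 1 + m), n.choose k • M ^ k :=
    fun s hs hout => sum_subset (range_subset_range.2 hs) fun k _ hk =>
      hvanish k (hout k (by simpa using hk))
  simp only [(Commute.one_right M).add_pow, one_pow, mul_one, ← nsmul_eq_mul']
  rw [hextend m (by omega) (fun k hk => Or.inr hk),
    hextend (n + 1) (by omega) (fun k hk => Or.inl hk)]

theorem norm_add_one_pow_le_of_pow_eq_zero [SeminormedRing R] {M : R} {m : ℕ} (hM : M ^ m = 0)
    (n : ℕ) : ‖(M + 1) ^ n‖ ≤ (∑ k ∈ range m, ‖M ^ k‖) * ((n : ℝ) + 1) ^ m := by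
  rw [add_one_pow_eq_sum_range_of_pow_eq_zero hM, sum_mul]
  refine (norm_sum_le _ _).trans (sum_le_sum fun k hk => norm_nsmul_le.trans ?_)
  rw [mul_comm]
  gcongr
  have hchoose : n.choose k ≤ (n + 1) ^ m :=
    (Nat.choose_le_pow n k).trans <| (Nat.pow_le_pow_left n.le_succ k).trans <|
      Nat.pow_le_pow_right n.succ_pos (mem_range.1 hk).le
  exact_mod_cast hchoose

end TruncatedBinomial

section ScalarPlusNilpotent

variable {𝕜 R : Type*} [Field 𝕜] [Ring R] [Algebra 𝕜 R] {a : 𝕜}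

theorem isUnit_of_isNilpotent_sub_algebraMap {x : R} (ha : a ≠ 0) (hx : IsNilpotent (x - algebraMap 𝕜 R a)) : IsUnit x := by
  simpa using hx.isUnit_add_left_of_commute ((isUnit_iff_ne_zero.2 ha).map (algebraMap 𝕜 R))
    (Algebra.commute_algebraMap_right a _)

theorem isNilpotent_inv_sub_algebraMap (u : Rˣ) (ha : a ≠ 0)
    (hu : IsNilpotent (↑u - algebraMap 𝕜 R a)) :
    IsNilpotent (↑u⁻¹ - algebraMap 𝕜 R a⁻¹) := by
  have hcomm : Commute (algebraMap 𝕜 R a⁻¹ * ↑u⁻¹) (↑u - algebraMap 𝕜 R a) :=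
    (Algebra.commute_algebraMap_left _ _).mul_left
      ((Commute.refl (u : R)).units_inv_left.sub_right (Algebra.commute_algebraMap_right _ _))
  have hfactor : ↑u⁻¹ - algebraMap 𝕜 R a⁻¹ =
      -(algebraMap 𝕜 R a⁻¹ * ↑u⁻¹ * (↑u - algebraMap 𝕜 R a)) := by
    rw [mul_sub, mul_assoc, u.inv_mul, mul_one, mul_assoc,
      (Algebra.commute_algebraMap_right a (↑u⁻¹ : R)).eq, ← mul_assoc, ← map_mul,
      inv_mul_cancel₀ ha, map_one, one_mul, neg_sub]
  rw [hfactor]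
  exact (hcomm.isNilpotent_mul_left hu).neg

end ScalarPlusNilpotent

theorem exists_norm_pow_le_of_isNilpotent_sub_algebraMap {𝕜 R : Type*} [NormedField 𝕜]
    [SeminormedRing R] [NormedAlgebra 𝕜 R] {x : R} {a : 𝕜} (ha : a ≠ 0)
    (hx : IsNilpotent (x - algebraMap 𝕜 R a)) :
    ∃ C > 0, ∃ m : ℕ, ∀ n : ℕ, ‖x ^ n‖ ≤ C * ((n : ℝ) + 1) ^ m * ‖a‖ ^ n := by
  obtain ⟨m, hm⟩ := hx
  set M := a⁻¹ • (x - algebraMap 𝕜 R a)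
  have hxM : x = a • (M + 1) := by
    rw [smul_add, smul_smul, mul_inv_cancel₀ ha, one_smul, ← Algebra.algebraMap_eq_smul_one,
      sub_add_cancel]
  have hMm : M ^ m = 0 := by rw [smul_pow, hm, smul_zero]
  refine ⟨∑ k ∈ range m, ‖M ^ k‖ + 1, by positivity, m, fun n => ?_⟩
  calc ‖x ^ n‖ ≤ ‖a‖ ^ n * ‖(M + 1) ^ n‖ := by
        rw [hxM, smul_pow, ← norm_pow]; exact norm_smul_le _ _
    _ ≤ ‖a‖ ^ n * ((∑ k ∈ range m, ‖M ^ k‖) * ((n : ℝ) + 1) ^ m) := by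
        gcongr; exact norm_add_one_pow_le_of_pow_eq_zero hMm n
    _ ≤ (∑ k ∈ range m, ‖M ^ k‖ + 1) * ((n : ℝ) + 1) ^ m * ‖a‖ ^ n := by
        rw [mul_comm, mul_assoc, mul_assoc]; gcongr; linarith

theorem tendsto_mul_add_one_rpow_rpow_inv {c : ℝ} (hc : 0 < c) (k : ℝ) :
    Tendsto (fun n : ℕ => (c * ((n : ℝ) + 1) ^ k) ^ (n : ℝ)⁻¹) atTop (𝓝 1) := by
  have hconst : Tendsto (fun n : ℕ => c ^ (n : ℝ)⁻¹) atTop (𝓝 1) := by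
    simpa using tendsto_const_nhds.rpow tendsto_inv_atTop_nhds_zero_nat (Or.inl hc.ne')
  have hpoly : Tendsto (fun n : ℕ => ((n : ℝ) + 1) ^ (k / (1 * ((n : ℝ) + 1) + -1))) atTop
      (𝓝 1) :=
    (tendsto_rpow_div_mul_add k 1 (-1) one_ne_zero.symm).comp
      (tendsto_atTop_add_const_right _ 1 tendsto_natCast_atTop_atTop)
  refine (one_mul (1 : ℝ) ▸ hconst.mul hpoly).congr fun n => ?_
  rw [mul_rpow hc.le (by positivity), ← rpow_mul (by positivity)]
  congr 2
  ring

theorem tendsto_rpow_inv_of_le_of_le {u p q : ℕ → ℝ} {r : ℝ} (hr : 0 < r)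
    (hp : Tendsto (fun n : ℕ => p n ^ (n : ℝ)⁻¹) atTop (𝓝 1))
    (hq : Tendsto (fun n : ℕ => q n ^ (n : ℝ)⁻¹) atTop (𝓝 1)) (hp₀ : ∀ n, 0 ≤ p n)
    (hlow : ∀ n, p n * r ^ n ≤ u n) (hup : ∀ n, u n ≤ q n * r ^ n) :
    Tendsto (fun n : ℕ => u n ^ (n : ℝ)⁻¹) atTop (𝓝 r) := by
  have hroot {s : ℝ} {n : ℕ} (hs : 0 ≤ s) (hn : n ≠ 0) :
      (s * r ^ n) ^ (n : ℝ)⁻¹ = s ^ (n : ℝ)⁻¹ * r := by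
    rw [mul_rpow hs (by positivity), ← rpow_natCast, ← rpow_mul hr.le,
      mul_inv_cancel₀ (Nat.cast_ne_zero.2 hn), rpow_one]
  have hlow₀ : ∀ n, 0 ≤ p n * r ^ n := fun n => mul_nonneg (hp₀ n) (by positivity)
  refine tendsto_of_tendsto_of_tendsto_of_le_of_le' (one_mul r ▸ hp.mul_const r)
    (one_mul r ▸ hq.mul_const r) ?_ ?_ <;> filter_upwards [eventually_ne_atTop 0] with n hn
  · rw [← hroot (hp₀ n) hn]
    exact rpow_le_rpow (hlow₀ n) (hlow n) (by positivity)
  · have hq₀ : 0 ≤ q n :=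
      nonneg_of_mul_nonneg_left ((hlow₀ n).trans ((hlow n).trans (hup n))) (by positivity)
    rw [← hroot hq₀ hn]
    exact rpow_le_rpow ((hlow₀ n).trans (hlow n)) (hup n) (by positivity)

theorem tendsto_rpow_inv_of_polynomial_bounds {u : ℕ → ℝ} {r c C₁ C₂ : ℝ} {k₁ k₂ : ℕ}
    (hr : 0 < r) (hc : 0 < c) (hC₁ : 0 < C₁) (hC₂ : 0 < C₂)
    (hlow : ∀ n : ℕ, c * r ^ n ≤ C₁ * ((n : ℝ) + 1) ^ k₁ * u n)
    (hup : ∀ n : ℕ, u n ≤ C₂ * ((n : ℝ) + 1) ^ k₂ * r ^ n) :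
    Tendsto (fun n : ℕ => u n ^ (n : ℝ)⁻¹) atTop (𝓝 r) := by
  refine tendsto_rpow_inv_of_le_of_le hr
    (tendsto_mul_add_one_rpow_rpow_inv (div_pos hc hC₁) (-k₁))
    (tendsto_mul_add_one_rpow_rpow_inv hC₂ k₂) (fun n => by positivity) (fun n => ?_)
    (fun n => by rw [rpow_natCast]; exact hup n)
  rw [rpow_neg (by positivity), rpow_natCast]
  calc c / C₁ * (((n : ℝ) + 1) ^ k₁)⁻¹ * r ^ n = c * r ^ n / (C₁ * ((n : ℝ) + 1) ^ k₁) := by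
        ring
    _ ≤ u n := by rw [div_le_iff₀ (by positivity)]; linarith [hlow n]

theorem Matrix.isNilpotent_sub_algebraMap_of_isLowerTriangular {n R : Type*} [CommRing R]
    [Fintype n] [DecidableEq n] [LinearOrder n] {M : Matrix n n R} (hM : M.IsLowerTriangular)
    {a : R} (hdiag : ∀ i, M i i = a) : IsNilpotent (M - algebraMap R _ a) := by
  refine ⟨Fintype.card n, ?_⟩
  have hchar : M.charpoly = (Polynomial.X - Polynomial.C a) ^ Fintype.card n := by
    simp [Matrix.charpoly, Matrix.det_of_isLowerTriangular _ hM.charmatrix, hdiag]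
  simpa [hchar] using M.aeval_self_charpoly

theorem isNilpotent_jordanBlock_sub_algebraMap (l : ℕ) (lam : ℂ) :
    IsNilpotent (jordanBlock l lam - algebraMap ℂ _ lam) := by
  refine Matrix.isNilpotent_sub_algebraMap_of_isLowerTriangular (fun i j hij => ?_)
    (by simp [jordanBlock])
  have hij' : (i : ℕ) < j := hij
  simp only [jordanBlock]
  rw [if_neg (by omega), if_neg (by omega)]

attribute [local instance] Matrix.linftyOpNormedRing Matrix.linftyOpNormedAlgebra

theorem Matrix.norm_le_linfty_opNorm_mul_norm_mulVec_of_mul_eq_one {n α : Type*} [Fintype n]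
    [DecidableEq n] [NormedRing α] {A B : Matrix n n α} (hBA : B * A = 1) (v : n → α) :
    ‖v‖ ≤ ‖B‖ * ‖A.mulVec v‖ := by
  simpa [Matrix.mulVec_mulVec, hBA] using Matrix.linfty_opNorm_mulVec B (A.mulVec v)

/-- `‖·‖` on `Fin (l+1) → ℂ` is the sup norm (the Pi norm). -/
theorem jordan_pow_mulVec_growth (l : ℕ) (lam : ℂ) (hlam : lam ≠ 0)
    (v : Fin (l + 1) → ℂ) (hv : v ≠ 0) :
    Filter.Tendsto (fun n : ℕ => ‖((jordanBlock l lam) ^ n).mulVec v‖ ^ ((n : ℝ)⁻¹))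
      Filter.atTop (nhds ‖lam‖) := by
  set J := jordanBlock l lam
  have hN : IsNilpotent (J - algebraMap ℂ _ lam) :=
    isNilpotent_jordanBlock_sub_algebraMap l lam
  obtain ⟨U, hUJ⟩ := isUnit_of_isNilpotent_sub_algebraMap hlam hN
  obtain ⟨C, hC, m, hJ⟩ := exists_norm_pow_le_of_isNilpotent_sub_algebraMap hlam hN
  obtain ⟨C', hC', m', hJinv⟩ := exists_norm_pow_le_of_isNilpotent_sub_algebraMap
    (inv_ne_zero hlam) (isNilpotent_inv_sub_algebraMap U hlam (hUJ ▸ hN))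
  have hUinv (n : ℕ) : (↑U⁻¹ ^ n : Matrix (Fin (l + 1)) (Fin (l + 1)) ℂ) * J ^ n = 1 := by
    rw [← hUJ, ← (Commute.refl _).units_inv_left.mul_pow, U.inv_mul, one_pow]
  have hv₀ : 0 < ‖v‖ := norm_pos_iff.2 hv
  refine tendsto_rpow_inv_of_polynomial_bounds (k₁ := m') (k₂ := m) (norm_pos_iff.2 hlam) hv₀ hC'
    (mul_pos hC hv₀) (fun n => ?_) (fun n => ?_)
  · calc ‖v‖ * ‖lam‖ ^ n
          ≤ C' * ((n : ℝ) + 1) ^ m' * ‖lam⁻¹‖ ^ n * ‖(J ^ n).mulVec v‖ * ‖lam‖ ^ n := by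
          gcongr
          exact (Matrix.norm_le_linfty_opNorm_mul_norm_mulVec_of_mul_eq_one (hUinv n) v).trans
            (by gcongr; exact hJinv n)
      _ = C' * ((n : ℝ) + 1) ^ m' * ‖(J ^ n).mulVec v‖ := by
          rw [norm_inv, inv_pow]; field_simp
  · calc ‖(J ^ n).mulVec v‖ ≤ ‖J ^ n‖ * ‖v‖ := Matrix.linfty_opNorm_mulVec _ _
      _ ≤ C * ((n : ℝ) + 1) ^ m * ‖lam‖ ^ n * ‖v‖ := by gcongr; exact hJ n
      _ = C * ‖v‖ * ((n : ℝ) + 1) ^ m * ‖lam‖ ^ n := by ring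
end

section
/- If λ ≠ 0, then for every nonzero vector v ∈ ℂ^{l+1}, the limit lim_{n→∞} ‖Λ^{−n} v‖^{1/n} exists and equals |λ|^{−1}, where Λ is the invertible Jordan block of eigenvalue λ. -/
open Filter Topology

theorem tendsto_const_rpow_inv_natCast {c : ℝ} (hc : 0 < c) :
    Tendsto (fun k : ℕ => c ^ (k : ℝ)⁻¹) atTop (𝓝 1) := by
  have h := (Real.continuousAt_const_rpow hc.ne').tendsto.comp
    (tendsto_inv_atTop_zero.comp (tendsto_natCast_atTop_atTop (R := ℝ)))
  simpa [Function.comp_def] using h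

theorem tendsto_rpow_inv_natCast_of_le_of_le {x y : ℕ → ℝ} {a b c : ℝ} (ha : 0 ≤ a)
    (hb : 0 < b) (hc : 0 < c) (hy : Tendsto (fun k : ℕ => y k ^ (k : ℝ)⁻¹) atTop (𝓝 a))
    (hlow : ∀ k, b * a ^ k ≤ x k) (hup : ∀ k, x k ≤ c * y k) :
    Tendsto (fun k : ℕ => x k ^ (k : ℝ)⁻¹) atTop (𝓝 a) := by
  have hlowT : Tendsto (fun k : ℕ => b ^ (k : ℝ)⁻¹ * a) atTop (𝓝 a) := by
    simpa using (tendsto_const_rpow_inv_natCast hb).mul_const a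
  have hupT : Tendsto (fun k : ℕ => c ^ (k : ℝ)⁻¹ * y k ^ (k : ℝ)⁻¹) atTop (𝓝 a) := by
    simpa using (tendsto_const_rpow_inv_natCast hc).mul hy
  refine tendsto_of_tendsto_of_tendsto_of_le_of_le' hlowT hupT ?_ ?_ <;>
    filter_upwards [eventually_ne_atTop 0] with k hk
  · calc b ^ (k : ℝ)⁻¹ * a = (b * a ^ k) ^ (k : ℝ)⁻¹ := by
          rw [Real.mul_rpow hb.le (by positivity), Real.pow_rpow_inv_natCast ha hk]
      _ ≤ x k ^ (k : ℝ)⁻¹ := Real.rpow_le_rpow (by positivity) (hlow k) (by positivity)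
  · have hx : 0 ≤ x k := (by positivity : 0 ≤ b * a ^ k).trans (hlow k)
    have hy : 0 ≤ y k := nonneg_of_mul_nonneg_right (hx.trans (hup k)) hc
    calc x k ^ (k : ℝ)⁻¹ ≤ (c * y k) ^ (k : ℝ)⁻¹ :=
          Real.rpow_le_rpow hx (hup k) (by positivity)
      _ = c ^ (k : ℝ)⁻¹ * y k ^ (k : ℝ)⁻¹ := Real.mul_rpow hc.le hy

theorem spectrum.tendsto_norm_pow_rpow_inv_of_spectralRadius_eq {A : Type*} [NormedRing A]
    [NormedAlgebra ℂ A] [CompleteSpace A] {a : A} {r : NNReal} (h : spectralRadius ℂ a = r) :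
    Tendsto (fun k : ℕ => ‖a ^ k‖ ^ (k : ℝ)⁻¹) atTop (𝓝 r) := by
  have hG := spectrum.pow_norm_pow_one_div_tendsto_nhds_spectralRadius a
  rw [h] at hG
  refine ((ENNReal.tendsto_toReal ENNReal.coe_ne_top).comp hG).congr fun k => ?_
  simp [ENNReal.toReal_ofReal (Real.rpow_nonneg (norm_nonneg _) _)]

namespace Matrix

variable {n : Type*} [Fintype n] [LinearOrder n]

section Semiring

variable {R : Type*} [Semiring R] {A B : Matrix n n R}

theorem IsLowerTriangular.pow (hA : A.IsLowerTriangular) (k : ℕ) :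
    (A ^ k).IsLowerTriangular :=
  BlockTriangular.pow hA k

theorem IsLowerTriangular.mul_apply_self (hA : A.IsLowerTriangular)
    (hB : B.IsLowerTriangular) (i : n) : (A * B) i i = A i i * B i i := by
  rw [mul_apply, Finset.sum_eq_single i]
  · intro k _ hk
    rcases hk.lt_or_gt with h | h
    · rw [hB h, mul_zero]
    · rw [hA h, zero_mul]
  · simp

theorem IsLowerTriangular.pow_apply_self (hA : A.IsLowerTriangular) (i : n) :
    ∀ k : ℕ, (A ^ k) i i = A i i ^ k
  | 0 => by simp
  | k + 1 => by rw [pow_succ, pow_succ, (hA.pow k).mul_apply_self hA, hA.pow_apply_self i k]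

theorem IsLowerTriangular.mulVec_apply_of_forall_lt (hA : A.IsLowerTriangular) {v : n → R}
    {i : n} (hv : ∀ j < i, v j = 0) : (A *ᵥ v) i = A i i * v i := by
  rw [mulVec, dotProduct, Finset.sum_eq_single i]
  · intro k _ hk
    rcases hk.lt_or_gt with h | h
    · rw [hv k h, mul_zero]
    · rw [hA h, zero_mul]
  · simp

end Semiring

section Field

variable {K : Type*} [Field K] {A : Matrix n n K}

theorem IsLowerTriangular.inv (hA : A.IsLowerTriangular) : A⁻¹.IsLowerTriangular := by
  by_cases hdet : IsUnit A.det
  · have := A.invertibleOfIsUnitDet hdet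
    exact blockTriangular_inv_of_blockTriangular hA
  · rw [nonsing_inv_apply_not_isUnit A hdet]
    exact blockTriangular_zero

theorem IsLowerTriangular.inv_apply_self (hA : A.IsLowerTriangular) (hdet : IsUnit A.det)
    (i : n) : A⁻¹ i i = (A i i)⁻¹ := by
  refine eq_inv_of_mul_eq_one_left ?_
  rw [← hA.inv.mul_apply_self hA, nonsing_inv_mul A hdet, one_apply_eq]

theorem IsLowerTriangular.spectrum_eq (hA : A.IsLowerTriangular) :
    spectrum K A = Set.range A.diag := by
  ext μ
  rw [spectrum.mem_iff, algebraMap_eq_diagonal, isUnit_iff_isUnit_det,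
    det_of_isLowerTriangular _ ((blockTriangular_diagonal _).sub hA)]
  simp [Finset.prod_eq_zero_iff, sub_eq_zero, @eq_comm _ μ]

end Field

attribute [local instance] Matrix.linftyOpNormedRing Matrix.linftyOpNormedAlgebra

theorem IsLowerTriangular.tendsto_norm_pow_mulVec_rpow_inv
    {A : Matrix n n ℂ} (hA : A.IsLowerTriangular) {μ : ℂ} (hdiag : ∀ i, A i i = μ)
    {v : n → ℂ} (hv : v ≠ 0) :
    Tendsto (fun k : ℕ => ‖(A ^ k) *ᵥ v‖ ^ (k : ℝ)⁻¹) atTop (𝓝 ‖μ‖) := by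
  obtain ⟨i, hvi, hmin⟩ : ∃ i, v i ≠ 0 ∧ ∀ j < i, v j = 0 := by
    obtain ⟨i, hi, hmin⟩ := wellFounded_lt.has_min {i | v i ≠ 0} (Function.ne_iff.mp hv)
    exact ⟨i, hi, fun j hj => not_not.mp fun h => hmin j h hj⟩
  have hspec : spectrum ℂ A = {μ} := by
    have : Nonempty n := ⟨i⟩
    rw [hA.spectrum_eq, show A.diag = fun _ => μ from funext hdiag, Set.range_const]
  have hgelfand : Tendsto (fun k : ℕ => ‖A ^ k‖ ^ (k : ℝ)⁻¹) atTop (𝓝 ‖μ‖) :=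
    spectrum.tendsto_norm_pow_rpow_inv_of_spectralRadius_eq (r := ‖μ‖₊)
      (by simp [spectralRadius, hspec])
  refine tendsto_rpow_inv_natCast_of_le_of_le (norm_nonneg μ) (norm_pos_iff.mpr hvi)
    (norm_pos_iff.mpr hv) hgelfand (fun k => ?_) (fun k => ?_)
  · calc ‖v i‖ * ‖μ‖ ^ k = ‖(A ^ k *ᵥ v) i‖ := by
          rw [(hA.pow k).mulVec_apply_of_forall_lt hmin, hA.pow_apply_self, hdiag, norm_mul,
            norm_pow, mul_comm]
      _ ≤ ‖A ^ k *ᵥ v‖ := norm_le_pi_norm _ i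
  · exact (linfty_opNorm_mulVec _ _).trans_eq (mul_comm _ _)

end Matrix

theorem jordanBlock_isLowerTriangular (l : ℕ) (lam : ℂ) :
    (jordanBlock l lam).IsLowerTriangular := by
  intro i j (hij : i < j)
  have : (i : ℕ) < j := hij
  simp only [jordanBlock]
  rw [if_neg (by omega), if_neg (by omega)]

@[simp]
theorem jordanBlock_apply_self (l : ℕ) (lam : ℂ) (i : Fin (l + 1)) :
    jordanBlock l lam i i = lam := by
  simp [jordanBlock]

/-- `‖·‖` on `Fin (l+1) → ℂ` is the sup norm (the Pi norm). -/
theorem jordan_inv_pow_mulVec_growth (l : ℕ) (lam : ℂ) (hlam : lam ≠ 0)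
    (v : Fin (l + 1) → ℂ) (hv : v ≠ 0) :
    Filter.Tendsto (fun n : ℕ => ‖((jordanBlock l lam)⁻¹ ^ n).mulVec v‖ ^ ((n : ℝ)⁻¹))
      Filter.atTop (nhds (‖lam‖⁻¹)) := by
  have hJ := jordanBlock_isLowerTriangular l lam
  have hdet : IsUnit (jordanBlock l lam).det := by
    simp [Matrix.det_of_isLowerTriangular _ hJ, hlam]
  rw [← norm_inv]
  exact hJ.inv.tendsto_norm_pow_mulVec_rpow_inv
    (fun i => by rw [hJ.inv_apply_self hdet, jordanBlock_apply_self]) hv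
end
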